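/- arXiv:1607.02067 — 6 statements merged into one kernel-verified Lean document; each statement's English description precedes it below -/
import Mathlib

section
/- Assume K ≥ 0. For every m = 1,…,n and every t with T_{m−1} ≤ t < T_m one has the strict inequality G¹_m(t) > G²_m(t). Moreover G¹_n(T_n) = G²_n(T_n) = 0. -/
open intervalIntegral Real Filter

/-- `exp(-∫₀ᵗ α(s) ds)`. -/
noncomputable def ed (α : ℝ → ℝ) (t : ℝ) : ℝ := Real.exp (-∫ s in (0:ℝ)..t, α s)

/-- `c_i = exp(-∫₀^{T_i} α(s) ds)`. -/
noncomputable def c (α : ℝ → ℝ) (T : ℕ → ℝ) (i : ℕ) : ℝ := ed α (T i)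

/-- `G¹_m(t) = exp(-∫₀ᵗ α) - c_n e^{-κ(T_n-t)} - c_m (T_m-t) K e^{-κ(T_m-t)}
  - ΔK ∑_{j=m+1}^n c_j e^{-κ(T_j-t)}`. -/
noncomputable def G1 (α : ℝ → ℝ) (T : ℕ → ℝ) (n : ℕ) (κ Δ K : ℝ) (m : ℕ) (t : ℝ) : ℝ :=
  ed α t - c α T n * Real.exp (-κ * (T n - t))
    - c α T m * ((T m - t) * K) * Real.exp (-κ * (T m - t))
    - Δ * K * ∑ j ∈ Finset.Icc (m + 1) n, c α T j * Real.exp (-κ * (T j - t))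

/-- `Ĝ¹_m(t) = exp(-∫₀ᵗ α) - c_n - c_m (T_m-t) K - ΔK ∑_{j=m+1}^n c_j`. -/
noncomputable def Ghat1 (α : ℝ → ℝ) (T : ℕ → ℝ) (n : ℕ) (Δ K : ℝ) (m : ℕ) (t : ℝ) : ℝ :=
  ed α t - c α T n - c α T m * ((T m - t) * K)
    - Δ * K * ∑ j ∈ Finset.Icc (m + 1) n, c α T j

/-- `G²_m(t) = θ(Ĝ¹_m(t) − G¹_m(t)) + Ĝ¹_m(t)`. -/
noncomputable def G2 (α : ℝ → ℝ) (T : ℕ → ℝ) (n : ℕ) (κ θ Δ K : ℝ) (m : ℕ) (t : ℝ) : ℝ :=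
  θ * (Ghat1 α T n Δ K m t - G1 α T n κ Δ K m t) + Ghat1 α T n Δ K m t

/-- If `K ≥ 0` then `G¹_m(t) > G²_m(t)` on `[T_{m-1}, T_m)` for every `m = 1,…,n`,
and `G¹_n(T_n) = G²_n(T_n) = 0`. -/
theorem stmt_3 (n : ℕ) (hn : 1 ≤ n) (T : ℕ → ℝ) (Δ κ θ K : ℝ)
    (hT0 : 0 < T 0) (hΔ : 0 < Δ)
    (hten : ∀ i, 1 ≤ i → i ≤ n → T i - T (i - 1) = Δ)
    (hκ : 0 < κ) (hθ : 0 < θ) (α : ℝ → ℝ) (hα : Continuous α)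
    (hK : 0 ≤ K) :
    (∀ m, 1 ≤ m → m ≤ n → ∀ t, T (m - 1) ≤ t → t < T m →
      G2 α T n κ θ Δ K m t < G1 α T n κ Δ K m t) ∧
    G1 α T n κ Δ K n (T n) = 0 ∧ G2 α T n κ θ Δ K n (T n) = 0 := by
  have hmono : ∀ j, j ≤ n → ∀ i, i ≤ j → T i ≤ T j := by
    intro j
    induction j with
    | zero => intro _ i hi; interval_cases i; exact le_rfl
    | succ k ih =>
      intro hk i hi
      have hstep : T (k + 1) = T k + Δ := by
        have := hten (k + 1) (Nat.le_add_left 1 k) hk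
        simp at this; linarith
      rcases Nat.lt_or_ge i (k+1) with h | h
      · have := ih (le_of_lt (Nat.lt_of_succ_le hk)) i (Nat.lt_succ_iff.mp h)
        linarith
      · have : i = k + 1 := le_antisymm hi h
        simp [this]
  have cpos : ∀ i, 0 < c α T i := fun i => Real.exp_pos _
  have key : ∀ m, 1 ≤ m → m ≤ n → ∀ t, t < T m →
      Ghat1 α T n Δ K m t < G1 α T n κ Δ K m t := by
    intro m hm hmn t ht
    have hTmn : T m ≤ T n := hmono n le_rfl m hmn
    have h1 : c α T n * Real.exp (-κ * (T n - t)) < c α T n := by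
      have hx : -κ * (T n - t) < 0 := by nlinarith
      have := Real.exp_lt_one_iff.mpr hx
      nlinarith [cpos n]
    have h2 : c α T m * ((T m - t) * K) * Real.exp (-κ * (T m - t))
        ≤ c α T m * ((T m - t) * K) := by
      have hx : -κ * (T m - t) ≤ 0 := by nlinarith
      have he : Real.exp (-κ * (T m - t)) ≤ 1 := Real.exp_le_one_iff.mpr hx
      have hnn : 0 ≤ c α T m * ((T m - t) * K) := by
        have h0 := mul_nonneg (le_of_lt (sub_pos.mpr ht)) hK
        nlinarith [cpos m]
      nlinarith
    have h3 : (∑ j ∈ Finset.Icc (m + 1) n, c α T j * Real.exp (-κ * (T j - t)))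
        ≤ ∑ j ∈ Finset.Icc (m + 1) n, c α T j := by
      apply Finset.sum_le_sum
      intro j hj
      simp only [Finset.mem_Icc] at hj
      have hTj : T m ≤ T j := hmono j hj.2 m (le_of_lt hj.1)
      have hx : -κ * (T j - t) ≤ 0 := by nlinarith
      have he : Real.exp (-κ * (T j - t)) ≤ 1 := Real.exp_le_one_iff.mpr hx
      nlinarith [cpos j]
    have h3' : Δ * K * (∑ j ∈ Finset.Icc (m + 1) n, c α T j * Real.exp (-κ * (T j - t)))
        ≤ Δ * K * ∑ j ∈ Finset.Icc (m + 1) n, c α T j := by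
      apply mul_le_mul_of_nonneg_left h3 (by positivity)
    unfold Ghat1 G1
    linarith
  constructor
  · intro m hm hmn t _ ht
    have hG := key m hm hmn t ht
    unfold G2
    nlinarith
  · have hG1 : G1 α T n κ Δ K n (T n) = 0 := by
      unfold G1 c
      simp
    have hGh : Ghat1 α T n Δ K n (T n) = 0 := by
      unfold Ghat1 c
      simp
    refine ⟨hG1, ?_⟩
    unfold G2
    rw [hG1, hGh]
    ring
end

section
/- Assume 0 < K ≤ κ + α(s) for all s. Then for every m = 1,…,n and every t with T_{m−1} ≤ t < T_m one has π_m(t) = (exp(−∫₀ᵗ α(s) ds)/κ)[κ + α(t) − K e^{−∫ₜ^{T_m}(κ+α(s)) ds}] > 0; consequently H¹_m(t) := −(κ + α(t)) exp(−∫₀ᵗ α(s) ds) + c_m K e^{−κ(T_m−t)} = −κ π_m(t) < 0. -/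
/-! Since `∫ₜ^{T_m}(κ + α) = κ (T_m − t) + ∫ₜ^{T_m} α` and `c_m = e^{−∫₀ᵗ α} e^{−∫ₜ^{T_m} α}`, the term
`c_m K e^{−κ(T_m−t)}` of `κ π_m(t)` equals `e^{−∫₀ᵗ α} K e^{−∫ₜ^{T_m}(κ+α)}`. For `t < T_m` the exponent
is negative because `κ + α ≥ K > 0`, so `K e^{−∫ₜ^{T_m}(κ+α)} < K ≤ κ + α(t)`, whence `π_m(t) > 0`. -/

open intervalIntegral Real Filter

/-- `π_m(t) = (1/κ)[exp(−∫₀ᵗ α)(κ + α(t)) − c_m K e^{−κ(T_m−t)}]`. -/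
noncomputable def piF (α : ℝ → ℝ) (T : ℕ → ℝ) (κ K : ℝ) (m : ℕ) (t : ℝ) : ℝ :=
  (1 / κ) * (ed α t * (κ + α t) - c α T m * K * Real.exp (-κ * (T m - t)))

/-- `H¹_m(t) = −(κ + α(t)) exp(−∫₀ᵗ α) + c_m K e^{−κ(T_m−t)}`. -/
noncomputable def H1 (α : ℝ → ℝ) (T : ℕ → ℝ) (κ K : ℝ) (m : ℕ) (t : ℝ) : ℝ :=
  -(κ + α t) * ed α t + c α T m * K * Real.exp (-κ * (T m - t))

section

open MeasureTheory (volume)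

variable {α : ℝ → ℝ}

theorem ed_eq_ed_mul_exp_neg_integral {a b : ℝ} (h0a : IntervalIntegrable α volume 0 a)
    (hab : IntervalIntegrable α volume a b) :
    ed α b = ed α a * Real.exp (-∫ s in a..b, α s) := by
  rw [ed, ed, ← Real.exp_add, ← integral_add_adjacent_intervals h0a hab, neg_add]

theorem exp_neg_integral_const_add {a b : ℝ} (κ : ℝ) (hab : IntervalIntegrable α volume a b) :
    Real.exp (-∫ s in a..b, (κ + α s))
      = Real.exp (-κ * (b - a)) * Real.exp (-∫ s in a..b, α s) := by
  rw [integral_add intervalIntegrable_const hab, integral_const, smul_eq_mul, ← Real.exp_add]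
  ring_nf

theorem exp_neg_integral_lt_one {f : ℝ → ℝ} {a b : ℝ} (hf : IntervalIntegrable f volume a b)
    (hpos : ∀ x, 0 < f x) (hab : a < b) :
    Real.exp (-∫ s in a..b, f s) < 1 := by
  rw [Real.exp_lt_one_iff, neg_lt_zero]
  exact intervalIntegral_pos_of_pos_on hf (fun x _ ↦ hpos x) hab

variable {T : ℕ → ℝ} {κ K : ℝ} {m : ℕ} {t : ℝ}

theorem piF_eq (h0t : IntervalIntegrable α volume 0 t)
    (htm : IntervalIntegrable α volume t (T m)) :
    piF α T κ K m t
      = ed α t / κ * (κ + α t - K * Real.exp (-∫ s in t..(T m), (κ + α s))) := by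
  rw [piF, c, ed_eq_ed_mul_exp_neg_integral h0t htm, exp_neg_integral_const_add κ htm]
  ring

theorem H1_eq_neg_mul_piF (hκ : κ ≠ 0) : H1 α T κ K m t = -κ * piF α T κ K m t := by
  rw [H1, piF]
  field_simp
  ring

theorem piF_pos (hα : Continuous α) (hκ : 0 < κ) (hK : 0 < K) (hKκα : ∀ s, K ≤ κ + α s)
    (ht : t < T m) : 0 < piF α T κ K m t := by
  rw [piF_eq (hα.intervalIntegrable _ _) (hα.intervalIntegrable _ _)]
  have hexp : Real.exp (-∫ s in t..(T m), (κ + α s)) < 1 :=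
    exp_neg_integral_lt_one ((continuous_const.add hα).intervalIntegrable _ _)
      (fun s ↦ hK.trans_le (hKκα s)) ht
  have hdiscount : K * Real.exp (-∫ s in t..(T m), (κ + α s)) < κ + α t :=
    (mul_lt_of_lt_one_right hK hexp).trans_le (hKκα t)
  exact mul_pos (div_pos (Real.exp_pos _) hκ) (sub_pos.mpr hdiscount)

end

theorem stmt_7_general (T : ℕ → ℝ) (κ K : ℝ)
    (hκ : 0 < κ) (α : ℝ → ℝ) (hα : Continuous α)
    (hK : 0 < K) (hKκα : ∀ s, K ≤ κ + α s)
    (m : ℕ)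
    (t : ℝ) (ht2 : t < T m) :
    piF α T κ K m t
        = ed α t / κ *
            (κ + α t - K * Real.exp (-∫ s in t..(T m), (κ + α s))) ∧
      0 < piF α T κ K m t ∧
      H1 α T κ K m t = -κ * piF α T κ K m t ∧
      H1 α T κ K m t < 0 := by
  have hpos := piF_pos hα hκ hK hKκα ht2
  have hH : H1 α T κ K m t = -κ * piF α T κ K m t := H1_eq_neg_mul_piF hκ.ne'
  refine ⟨piF_eq (hα.intervalIntegrable _ _) (hα.intervalIntegrable _ _), hpos, hH, ?_⟩
  rw [hH, neg_mul]
  exact neg_neg_of_pos (mul_pos hκ hpos)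

/-- If `0 < K ≤ κ + α(s)` for all `s`, then on `[T_{m-1}, T_m)` one has
`π_m(t) = (e^{−∫₀ᵗ α}/κ)[κ + α(t) − K e^{−∫ₜ^{T_m}(κ+α)}] > 0`, and consequently
`H¹_m(t) = −κ π_m(t) < 0`. -/
theorem stmt_7 (n : ℕ) (hn : 1 ≤ n) (T : ℕ → ℝ) (Δ κ θ K : ℝ)
    (hT0 : 0 < T 0) (hΔ : 0 < Δ)
    (hten : ∀ i, 1 ≤ i → i ≤ n → T i - T (i - 1) = Δ)
    (hκ : 0 < κ) (hθ : 0 < θ) (α : ℝ → ℝ) (hα : Continuous α)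
    (hK : 0 < K) (hKκα : ∀ s, K ≤ κ + α s)
    (m : ℕ) (hm : 1 ≤ m) (hmn : m ≤ n)
    (t : ℝ) (ht1 : T (m - 1) ≤ t) (ht2 : t < T m) :
    piF α T κ K m t
        = ed α t / κ *
            (κ + α t - K * Real.exp (-∫ s in t..(T m), (κ + α s))) ∧
      0 < piF α T κ K m t ∧
      H1 α T κ K m t = -κ * piF α T κ K m t ∧
      H1 α T κ K m t < 0 :=
  stmt_7_general T κ K hκ α hα hK hKκα m t ht2
end

section
/- Assume K < α(T_n) + κ. Then lim_{t ↑ T_n} (−G²_n(t)/G¹_n(t)) = (θκ − α(T_n) + K)/(α(T_n) + κ − K), and moreover −H²_n(T_n)/H¹_n(T_n) equals the same value, where H¹_n(t) := −(κ + α(t)) exp(−∫₀ᵗ α(s) ds) + c_n K e^{−κ(T_n−t)} and H²_n(t) := −θ H¹_n(t) + (1 + θ)(c_n K − α(t) exp(−∫₀ᵗ α(s) ds)). In other words, the zero curves g of G and h of H have the same left limit at T_n. -/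
open intervalIntegral Real Filter

/-- `H²_m(t) = −θ H¹_m(t) + (1 + θ)(c_m K − α(t) e^{−∫₀ᵗ α})`. -/
noncomputable def H2 (α : ℝ → ℝ) (T : ℕ → ℝ) (κ θ K : ℝ) (m : ℕ) (t : ℝ) : ℝ :=
  -θ * H1 α T κ K m t + (1 + θ) * (c α T m * K - α t * ed α t)

/-! At `m = n` the sums in `G¹_n` and `Ĝ¹_n` are empty, so `G¹_n` and `G²_n` both vanish at `T_n`,
and differentiating shows that their derivatives there are exactly `H¹_n(T_n)` and `H²_n(T_n)`.
Since `H¹_n(T_n) = c_n (K − α(T_n) − κ) ≠ 0`, L'Hôpital's rule at a common simple zero gives the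
limit of `−G²_n/G¹_n` as `−H²_n(T_n)/H¹_n(T_n)`, which is a direct computation. -/

open scoped Topology

theorem tendsto_div_nhdsNE_of_hasDerivAt {𝕜 : Type*} [NontriviallyNormedField 𝕜]
    {f g : 𝕜 → 𝕜} {f' g' a : 𝕜} (hf : HasDerivAt f f' a) (hg : HasDerivAt g g' a)
    (hfa : f a = 0) (hga : g a = 0) (hg' : g' ≠ 0) :
    Tendsto (fun t => f t / g t) (𝓝[≠] a) (𝓝 (f' / g')) := by
  refine ((hasDerivAt_iff_tendsto_slope.mp hf).div
    (hasDerivAt_iff_tendsto_slope.mp hg) hg').congr' ?_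
  filter_upwards [self_mem_nhdsWithin] with t ht
  have hta : t - a ≠ 0 := sub_ne_zero.mpr ht
  simp only [Pi.div_apply, slope_def_field, hfa, hga, sub_zero]
  exact div_div_div_cancel_right₀ hta _ _

section

variable {α : ℝ → ℝ} {T : ℕ → ℝ} {n : ℕ} {κ θ Δ K : ℝ}

theorem hasDerivAt_ed (hα : Continuous α) (t : ℝ) :
    HasDerivAt (ed α) (-α t * ed α t) t := by
  have hI : HasDerivAt (fun t => ∫ s in (0:ℝ)..t, α s) (α t) t :=
    integral_hasDerivAt_right (hα.intervalIntegrable _ _)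
      (hα.stronglyMeasurableAtFilter _ _) hα.continuousAt
  exact hI.neg.exp.congr_deriv (by simp only [ed, Pi.neg_apply]; ring)

theorem hasDerivAt_const_mul_sub_mul (a b K x : ℝ) :
    HasDerivAt (fun t => a * ((b - t) * K)) (-(a * K)) x := by
  simpa using (((hasDerivAt_id x).const_sub b).mul_const K).const_mul a

theorem G1_last :
    G1 α T n κ Δ K n = fun t => ed α t - c α T n * exp (-κ * (T n - t))
      - c α T n * ((T n - t) * K) * exp (-κ * (T n - t)) := by
  ext t
  simp [G1]

theorem Ghat1_last :
    Ghat1 α T n Δ K n = fun t => ed α t - c α T n - c α T n * ((T n - t) * K) := by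
  ext t
  simp [Ghat1]

theorem G1_last_self : G1 α T n κ Δ K n (T n) = 0 := by
  simp [G1_last, c]

theorem G2_last_self : G2 α T n κ θ Δ K n (T n) = 0 := by
  simp [G2, G1_last, Ghat1_last, c]

theorem hasDerivAt_G1_last (hα : Continuous α) :
    HasDerivAt (G1 α T n κ Δ K n) (H1 α T κ K n (T n)) (T n) := by
  have hE : HasDerivAt (fun t => exp (-κ * (T n - t))) κ (T n) := by
    simpa using (((hasDerivAt_id (T n)).const_sub (T n)).const_mul (-κ)).exp
  have hL := hasDerivAt_const_mul_sub_mul (c α T n) (T n) K (T n)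
  have h := ((hasDerivAt_ed hα (T n)).sub (hE.const_mul (c α T n))).sub (hL.mul hE)
  rw [G1_last]
  exact h.congr_deriv (by simp only [H1, c, sub_self, mul_zero, exp_zero]; ring)

theorem hasDerivAt_Ghat1_last (hα : Continuous α) :
    HasDerivAt (Ghat1 α T n Δ K n) (c α T n * (K - α (T n))) (T n) := by
  have h := ((hasDerivAt_ed hα (T n)).sub_const (c α T n)).sub
    (hasDerivAt_const_mul_sub_mul (c α T n) (T n) K (T n))
  rw [Ghat1_last]
  exact h.congr_deriv (by simp only [c]; ring)

theorem hasDerivAt_G2_last (hα : Continuous α) :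
    HasDerivAt (G2 α T n κ θ Δ K n) (H2 α T κ θ K n (T n)) (T n) := by
  have hGhat : HasDerivAt (Ghat1 α T n Δ K n) _ (T n) := hasDerivAt_Ghat1_last hα
  have hG1 : HasDerivAt (G1 α T n κ Δ K n) _ (T n) := hasDerivAt_G1_last hα
  have h := ((hGhat.sub hG1).const_mul θ).add hGhat
  exact h.congr_deriv (by simp only [H2, H1, c, sub_self, mul_zero, exp_zero]; ring)

theorem H1_last_self : H1 α T κ K n (T n) = c α T n * (K - α (T n) - κ) := by
  simp only [H1, c, sub_self, mul_zero, exp_zero]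
  ring

theorem neg_H2_div_H1_last_self :
    -H2 α T κ θ K n (T n) / H1 α T κ K n (T n)
      = (θ * κ - α (T n) + K) / (α (T n) + κ - K) := by
  have hc : c α T n ≠ 0 := (exp_pos _).ne'
  have hH2 : H2 α T κ θ K n (T n) = c α T n * (θ * κ - α (T n) + K) := by
    simp only [H2, H1_last_self, c]
    ring
  rw [hH2, H1_last_self, neg_div, mul_div_mul_left _ _ hc, ← div_neg]
  congr 1
  ring

end

theorem stmt_13_general (n : ℕ) (T : ℕ → ℝ) (Δ κ θ K : ℝ)
    (α : ℝ → ℝ) (hα : Continuous α)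
    (hK : K < α (T n) + κ) :
    Filter.Tendsto (fun t => -G2 α T n κ θ Δ K n t / G1 α T n κ Δ K n t)
        (nhdsWithin (T n) (Set.Iio (T n)))
        (nhds ((θ * κ - α (T n) + K) / (α (T n) + κ - K))) ∧
      -H2 α T κ θ K n (T n) / H1 α T κ K n (T n)
        = (θ * κ - α (T n) + K) / (α (T n) + κ - K) := by
  have hH1 : H1 α T κ K n (T n) ≠ 0 := by
    rw [H1_last_self]
    exact mul_ne_zero (exp_pos _).ne' (by linarith)
  refine ⟨?_, neg_H2_div_H1_last_self⟩
  rw [← neg_H2_div_H1_last_self]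
  exact (tendsto_div_nhdsNE_of_hasDerivAt (hasDerivAt_G2_last hα).neg (hasDerivAt_G1_last hα)
    (neg_eq_zero.mpr G2_last_self) G1_last_self hH1).mono_left (nhdsLT_le_nhdsNE _)

/-- If `K < α(T_n) + κ` then `lim_{t ↑ T_n} (−G²_n(t)/G¹_n(t))
= (θκ − α(T_n) + K)/(α(T_n) + κ − K)` and `−H²_n(T_n)/H¹_n(T_n)` equals the same
value: the zero curves of `G` and `H` have the same left limit at `T_n`. -/
theorem stmt_13 (n : ℕ) (hn : 1 ≤ n) (T : ℕ → ℝ) (Δ κ θ K : ℝ)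
    (hT0 : 0 < T 0) (hΔ : 0 < Δ)
    (hten : ∀ i, 1 ≤ i → i ≤ n → T i - T (i - 1) = Δ)
    (hκ : 0 < κ) (hθ : 0 < θ) (α : ℝ → ℝ) (hα : Continuous α)
    (hK : K < α (T n) + κ) :
    Filter.Tendsto (fun t => -G2 α T n κ θ Δ K n t / G1 α T n κ Δ K n t)
        (nhdsWithin (T n) (Set.Iio (T n)))
        (nhds ((θ * κ - α (T n) + K) / (α (T n) + κ - K))) ∧
      -H2 α T κ θ K n (T n) / H1 α T κ K n (T n)
        = (θ * κ - α (T n) + K) / (α (T n) + κ - K) :=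
  stmt_13_general n T Δ κ θ K α hα hK
end

section
/- For every m = 1,…,n, every t ∈ [T_{m−1}, T_m) and every x > 0 one has the identity (1 − P(t,T_n;x)) / ((T_m − t) P(t,T_m;x) + Δ ∑_{j=m+1}^{n} P(t,T_j;x)) = f₁(t,x)/f₂(t,x); that is, the swap rate is the explicit linear-rational function f(t,x) = f₁(t,x)/f₂(t,x) of the factor value x. -/
open intervalIntegral Real Filter

/-- Zero-coupon bond price
`P(t,T;x) = exp(−∫ₜ^T α)(1 + θ + e^{−κ(T−t)}(x − θ))/(1 + x)`. -/
noncomputable def P (α : ℝ → ℝ) (κ θ t T x : ℝ) : ℝ :=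
  Real.exp (-∫ s in t..T, α s) *
    ((1 + θ + Real.exp (-κ * (T - t)) * (x - θ)) / (1 + x))

/-- Numerator `f₁(t,x)` of the linear-rational expression of the swap rate. -/
noncomputable def f1 (α : ℝ → ℝ) (κ θ : ℝ) (T : ℕ → ℝ) (n : ℕ) (t x : ℝ) : ℝ :=
  x * (1 - Real.exp (-∫ s in t..(T n), (κ + α s)))
    + 1 - Real.exp (-∫ s in t..(T n), α s) * (1 + θ)
    + θ * Real.exp (-∫ s in t..(T n), (κ + α s))

/-- Denominator `f₂(t,x)` of the linear-rational expression of the swap rate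
(for `t` in the `m`-th period). -/
noncomputable def f2 (α : ℝ → ℝ) (κ θ Δ : ℝ) (T : ℕ → ℝ) (n m : ℕ) (t x : ℝ) : ℝ :=
  x * ((T m - t) * Real.exp (-∫ s in t..(T m), (κ + α s))
      + Δ * ∑ j ∈ Finset.Icc (m + 1) n, Real.exp (-∫ s in t..(T j), (κ + α s)))
    + (T m - t) * Real.exp (-∫ s in t..(T m), α s)
        * (1 + θ - θ * Real.exp (-κ * (T m - t)))
    + Δ * ∑ j ∈ Finset.Icc (m + 1) n,
        Real.exp (-∫ s in t..(T j), α s) * (1 + θ - θ * Real.exp (-κ * (T j - t)))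

/-- The swap rate is the linear-rational function `f₁/f₂` of the factor value:
for `t ∈ [T_{m−1}, T_m)` and `x > 0`,
`(1 − P(t,T_n;x))/((T_m − t)P(t,T_m;x) + Δ ∑_{j=m+1}^n P(t,T_j;x)) = f₁(t,x)/f₂(t,x)`. -/
theorem stmt_16 (n : ℕ) (hn : 1 ≤ n) (T : ℕ → ℝ) (Δ κ θ : ℝ)
    (hT0 : 0 < T 0) (hΔ : 0 < Δ)
    (hten : ∀ i, 1 ≤ i → i ≤ n → T i - T (i - 1) = Δ)
    (hκ : 0 < κ) (hθ : 0 < θ) (α : ℝ → ℝ) (hα : Continuous α)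
    (m : ℕ) (hm : 1 ≤ m) (hmn : m ≤ n)
    (t : ℝ) (ht1 : T (m - 1) ≤ t) (ht2 : t < T m) (x : ℝ) (hx : 0 < x) :
    (1 - P α κ θ t (T n) x) /
        ((T m - t) * P α κ θ t (T m) x
          + Δ * ∑ j ∈ Finset.Icc (m + 1) n, P α κ θ t (T j) x)
      = f1 α κ θ T n t x / f2 α κ θ Δ T n m t x := by
  have h1x : (1:ℝ) + x ≠ 0 := by positivity
  have key : ∀ Tj : ℝ, Real.exp (-∫ s in t..Tj, (κ + α s))
      = Real.exp (-κ * (Tj - t)) * Real.exp (-∫ s in t..Tj, α s) := by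
    intro Tj
    rw [← Real.exp_add]
    congr 1
    rw [intervalIntegral.integral_add intervalIntegrable_const (hα.intervalIntegrable _ _),
      intervalIntegral.integral_const, smul_eq_mul]
    ring
  have hP : ∀ Tj : ℝ, (1 + x) * P α κ θ t Tj x
      = Real.exp (-∫ s in t..Tj, α s)
          * (1 + θ + Real.exp (-κ * (Tj - t)) * (x - θ)) := by
    intro Tj
    unfold P
    field_simp
  have hf1 : f1 α κ θ T n t x = (1 + x) * (1 - P α κ θ t (T n) x) := by
    unfold f1
    rw [show (1 + x) * (1 - P α κ θ t (T n) x)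
        = (1 + x) - (1 + x) * P α κ θ t (T n) x by ring, hP (T n), key (T n)]
    ring
  have hsum2 : (1 + x) * ∑ j ∈ Finset.Icc (m + 1) n, P α κ θ t (T j) x
      = x * ∑ j ∈ Finset.Icc (m + 1) n, Real.exp (-∫ s in t..(T j), (κ + α s))
        + ∑ j ∈ Finset.Icc (m + 1) n,
            Real.exp (-∫ s in t..(T j), α s)
              * (1 + θ - θ * Real.exp (-κ * (T j - t))) := by
    rw [Finset.mul_sum, Finset.mul_sum, ← Finset.sum_add_distrib]
    refine Finset.sum_congr rfl fun j _ => ?_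
    rw [hP (T j), key (T j)]
    ring
  have hf2 : f2 α κ θ Δ T n m t x
      = (1 + x) * ((T m - t) * P α κ θ t (T m) x
          + Δ * ∑ j ∈ Finset.Icc (m + 1) n, P α κ θ t (T j) x) := by
    unfold f2
    rw [show (1 + x) * ((T m - t) * P α κ θ t (T m) x
          + Δ * ∑ j ∈ Finset.Icc (m + 1) n, P α κ θ t (T j) x)
        = (T m - t) * ((1 + x) * P α κ θ t (T m) x)
          + Δ * ((1 + x) * ∑ j ∈ Finset.Icc (m + 1) n, P α κ θ t (T j) x) by ring,
      hP (T m), hsum2, key (T m)]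
    ring
  rw [hf1, hf2, mul_div_mul_left _ _ h1x]
end

section
/- Assume 0 < K < α(T_n) + κ and set x* := (θκ − α(T_n) + K)/(α(T_n) + κ − K). Then, with m = n in the definitions of f₁ and f₂ (empty sums), the limit lim_{t ↑ T_n} f₁(t, x*)/f₂(t, x*) exists and equals K; that is, the optimal exercise boundary in terms of the swap rate has left limit K at the final payment date T_n. -/
open intervalIntegral Real Filter

lemma aux_deriv (g : ℝ → ℝ) (hg : Continuous g) (c : ℝ) :
    HasDerivAt (fun t => Real.exp (∫ s in c..t, g s)) (g c) c := by
  have h1 : HasDerivAt (fun t => ∫ s in c..t, g s) (g c) c :=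
    intervalIntegral.integral_hasDerivAt_right (hg.intervalIntegrable _ _)
      (hg.stronglyMeasurableAtFilter _ _) hg.continuousAt
  simpa using h1.exp

lemma aux_slope (g : ℝ → ℝ) (hg : Continuous g) (c : ℝ) :
    Tendsto (fun t => (Real.exp (∫ s in c..t, g s) - 1) / (t - c))
      (nhdsWithin c (Set.Iio c)) (nhds (g c)) := by
  have h2 := hasDerivAt_iff_tendsto_slope.mp (aux_deriv g hg c)
  have h3 : Tendsto (slope (fun t => Real.exp (∫ s in c..t, g s)) c)
      (nhdsWithin c (Set.Iio c)) (nhds (g c)) :=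
    h2.mono_left (nhdsWithin_mono c (fun y hy => ne_of_lt hy))
  refine h3.congr (fun t => ?_)
  simp [slope_def_field]

lemma aux_cont (g : ℝ → ℝ) (hg : Continuous g) (c : ℝ) :
    Tendsto (fun t => Real.exp (∫ s in c..t, g s))
      (nhdsWithin c (Set.Iio c)) (nhds 1) := by
  have := (aux_deriv g hg c).continuousAt.continuousWithinAt (s := Set.Iio c)
  simpa [ContinuousWithinAt, intervalIntegral.integral_same] using this

/-- With `x* = (θκ − α(T_n) + K)/(α(T_n) + κ − K)` (the common left limit of the
optimal stopping boundaries) and `m = n` in `f₁, f₂`, the swap rate along the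
boundary satisfies `lim_{t ↑ T_n} f₁(t,x*)/f₂(t,x*) = K`. -/
theorem stmt_18 (n : ℕ) (hn : 1 ≤ n) (T : ℕ → ℝ) (Δ κ θ K : ℝ)
    (hT0 : 0 < T 0) (hΔ : 0 < Δ)
    (hten : ∀ i, 1 ≤ i → i ≤ n → T i - T (i - 1) = Δ)
    (hκ : 0 < κ) (hθ : 0 < θ) (α : ℝ → ℝ) (hα : Continuous α)
    (hK0 : 0 < K) (hK : K < α (T n) + κ) :
    Filter.Tendsto
      (fun t => f1 α κ θ T n t ((θ * κ - α (T n) + K) / (α (T n) + κ - K)) /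
        f2 α κ θ Δ T n n t ((θ * κ - α (T n) + K) / (α (T n) + κ - K)))
      (nhdsWithin (T n) (Set.Iio (T n))) (nhds K) := by
  set c := T n with hc
  set a := α (T n) with ha
  set x := (θ * κ - a + K) / (a + κ - K) with hx
  have hden : a + κ - K > 0 := by linarith
  have hgB : Continuous (fun s => κ + α s) := continuous_const.add hα
  -- abbreviations
  set EB : ℝ → ℝ := fun t => Real.exp (∫ s in c..t, (κ + α s)) with hEB
  set EA : ℝ → ℝ := fun t => Real.exp (∫ s in c..t, α s) with hEA
  set g1 : ℝ → ℝ := fun t => x * ((EB t - 1) / (t - c)) + (1 + θ) * ((EA t - 1) / (t - c))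
      - θ * ((EB t - 1) / (t - c)) with hg1
  set g2 : ℝ → ℝ := fun t => x * EB t + EA t * (1 + θ - θ * Real.exp (-κ * (c - t))) with hg2
  have hsB : Tendsto (fun t => (EB t - 1) / (t - c)) (nhdsWithin c (Set.Iio c)) (nhds (κ + a)) :=
    aux_slope _ hgB c
  have hsA : Tendsto (fun t => (EA t - 1) / (t - c)) (nhdsWithin c (Set.Iio c)) (nhds a) :=
    aux_slope _ hα c
  have hcB : Tendsto EB (nhdsWithin c (Set.Iio c)) (nhds 1) := aux_cont _ hgB c
  have hcA : Tendsto EA (nhdsWithin c (Set.Iio c)) (nhds 1) := aux_cont _ hα c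
  have hcE : Tendsto (fun t => Real.exp (-κ * (c - t))) (nhdsWithin c (Set.Iio c)) (nhds 1) := by
    have : Continuous (fun t : ℝ => Real.exp (-κ * (c - t))) := by continuity
    have h := this.continuousAt.continuousWithinAt (s := Set.Iio c) (x := c)
    simpa [ContinuousWithinAt] using h
  have hL1 : Tendsto g1 (nhdsWithin c (Set.Iio c))
      (nhds (x * (κ + a) + (1 + θ) * a - θ * (κ + a))) :=
    ((hsB.const_mul x).add (hsA.const_mul (1 + θ))).sub (hsB.const_mul θ)
  have hL2 : Tendsto g2 (nhdsWithin c (Set.Iio c)) (nhds (x * 1 + 1 * (1 + θ - θ * 1))) :=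
    (hcB.const_mul x).add (hcA.mul ((hcE.const_mul θ).const_sub (1 + θ)))
  have hx1 : x + 1 = κ * (1 + θ) / (a + κ - K) := by
    rw [hx]; field_simp; ring
  have hL2ne : x * 1 + 1 * (1 + θ - θ * 1) ≠ 0 := by
    have : x * 1 + 1 * (1 + θ - θ * 1) = x + 1 := by ring
    rw [this, hx1]
    positivity
  have hdiv := hL1.div hL2 hL2ne
  have hval : (x * (κ + a) + (1 + θ) * a - θ * (κ + a)) / (x * 1 + 1 * (1 + θ - θ * 1)) = K := by
    rw [hx]
    rw [div_eq_iff]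
    · field_simp
      ring
    · have h2 : (θ * κ - a + K) / (a + κ - K) * 1 + 1 * (1 + θ - θ * 1)
          = κ * (1 + θ) / (a + κ - K) := by field_simp; ring
      rw [h2]; positivity
  rw [hval] at hdiv
  refine hdiv.congr' ?_
  filter_upwards [self_mem_nhdsWithin] with t ht
  simp only [Pi.div_apply]
  have htc : t - c ≠ 0 := by simp only [Set.mem_Iio] at ht; linarith
  have hsym1 : (∫ s in t..c, (κ + α s)) = -∫ s in c..t, (κ + α s) :=
    intervalIntegral.integral_symm c t
  have hsym2 : (∫ s in t..c, α s) = -∫ s in c..t, α s :=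
    intervalIntegral.integral_symm c t
  have hf1 : f1 α κ θ T n t x = (c - t) * g1 t := by
    rw [f1, ← hc, hsym1, hsym2, neg_neg, neg_neg, hg1]
    simp only [← hEB, ← hEA]
    field_simp
    ring
  have hf2 : f2 α κ θ Δ T n n t x = (c - t) * g2 t := by
    rw [f2, ← hc, hsym1, hsym2, neg_neg, neg_neg, hg2]
    have : Finset.Icc (n + 1) n = ∅ := Finset.Icc_eq_empty (by omega)
    simp only [this, Finset.sum_empty, mul_zero, add_zero, ← hEB, ← hEA]
    ring
  rw [hg1, hg2] at *
  rw [hf1, hf2, mul_div_mul_left _ _ (by intro h; apply htc; linarith [sub_eq_zero.mp h] : c - t ≠ 0)]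
end

section
/- Let σ : ℝ → ℝ be continuous, let κ, w, u ∈ ℝ, and let I be an interval with u ∈ I on which D(t) := 1 − (w/2)∫ₜ^u e^{−κ(u−s)} σ(s)² ds never vanishes. Define φ(t) := e^{−κ(u−t)} w / D(t) for t ∈ I. Then φ(u) = w and φ satisfies the Riccati differential equation φ'(t) = κ φ(t) − (σ(t)²/2) φ(t)² for all t ∈ I. (This is the exponent φ(w,u,t) in the Fourier transform E_{t,x}[e^{w X_u}] = e^{ϕ(w,u,t) + x φ(w,u,t)} of the time-inhomogeneous square-root diffusion dX_t = κ(θ − X_t)dt + σ(t)√X_t dB_t.) -/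
open intervalIntegral Real

/-!
Write `φ = N / D` with `N(t) = e^{−κ(u−t)} w` and `D(t) = 1 − (w/2)∫ₜ^u e^{−κ(u−s)} σ(s)² ds`.
Then `N' = κ N`, and by the fundamental theorem of calculus `D' = (w/2) e^{−κ(u−t)} σ(t)² = (σ(t)²/2) N`;
the quotient rule turns these two linear equations into the Riccati equation for `N / D`.
-/

/-- The exponent `φ(w,u,t)` of the conditional Fourier transform of the time-inhomogeneous
square-root diffusion. -/
noncomputable def phi (σ : ℝ → ℝ) (κ w u t : ℝ) : ℝ :=
  Real.exp (-κ * (u - t)) * w /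
    (1 - w / 2 * ∫ s in t..u, Real.exp (-κ * (u - s)) * σ s ^ 2)

theorem HasDerivAt.div_of_deriv_eq_mul {N D : ℝ → ℝ} {κ a t : ℝ}
    (hN : HasDerivAt N (κ * N t) t) (hD : HasDerivAt D (a * N t) t) (hDt : D t ≠ 0) :
    HasDerivAt (fun s => N s / D s) (κ * (N t / D t) - a * (N t / D t) ^ 2) t :=
  (hN.div hD hDt).congr_deriv (by field_simp)

theorem hasDerivAt_exp_neg_mul_sub (κ u t : ℝ) :
    HasDerivAt (fun t => exp (-κ * (u - t))) (κ * exp (-κ * (u - t))) t :=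
  (((hasDerivAt_id t).const_sub u).const_mul (-κ)).exp.congr_deriv (by simp only [id]; ring)

theorem Continuous.hasDerivAt_integral_left {f : ℝ → ℝ} (hf : Continuous f) (t u : ℝ) :
    HasDerivAt (fun t => ∫ s in t..u, f s) (-f t) t :=
  integral_hasDerivAt_left (hf.intervalIntegrable t u) (hf.stronglyMeasurableAtFilter _ _)
    hf.continuousAt

theorem phi_self (σ : ℝ → ℝ) (κ w u : ℝ) : phi σ κ w u u = w := by
  simp [phi]

theorem hasDerivAt_phi {σ : ℝ → ℝ} (hσ : Continuous σ) {κ w u t : ℝ}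
    (hD : 1 - w / 2 * ∫ s in t..u, exp (-κ * (u - s)) * σ s ^ 2 ≠ 0) :
    HasDerivAt (phi σ κ w u) (κ * phi σ κ w u t - σ t ^ 2 / 2 * phi σ κ w u t ^ 2) t := by
  have hN : HasDerivAt (fun t => exp (-κ * (u - t)) * w) (κ * (exp (-κ * (u - t)) * w)) t :=
    ((hasDerivAt_exp_neg_mul_sub κ u t).mul_const w).congr_deriv (by ring)
  have hintegrand : Continuous fun s => exp (-κ * (u - s)) * σ s ^ 2 := by fun_prop
  have hDen : HasDerivAt (fun t => 1 - w / 2 * ∫ s in t..u, exp (-κ * (u - s)) * σ s ^ 2)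
      (σ t ^ 2 / 2 * (exp (-κ * (u - t)) * w)) t :=
    (((hintegrand.hasDerivAt_integral_left t u).const_mul (w / 2)).const_sub 1).congr_deriv (by ring)
  exact hN.div_of_deriv_eq_mul hDen hD

theorem stmt_19_general (σ : ℝ → ℝ) (hσ : Continuous σ) (κ w u : ℝ)
    (I : Set ℝ)
    (hD : ∀ t ∈ I,
      (1 - w / 2 * ∫ s in t..u, Real.exp (-κ * (u - s)) * σ s ^ 2) ≠ 0) :
    phi σ κ w u u = w ∧
      ∀ t ∈ I, HasDerivAt (phi σ κ w u)
        (κ * phi σ κ w u t - σ t ^ 2 / 2 * phi σ κ w u t ^ 2) t :=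
  ⟨phi_self σ κ w u, fun t ht => hasDerivAt_phi hσ (hD t ht)⟩

/-- On an interval `I ∋ u` where the denominator
`D(t) = 1 − (w/2)∫ₜ^u e^{−κ(u−s)} σ(s)² ds` does not vanish, `φ` satisfies
`φ(u) = w` and the Riccati equation `φ'(t) = κ φ(t) − (σ(t)²/2) φ(t)²`. -/
theorem stmt_19 (σ : ℝ → ℝ) (hσ : Continuous σ) (κ w u : ℝ)
    (I : Set ℝ) (hI : I.OrdConnected) (hu : u ∈ I)
    (hD : ∀ t ∈ I,
      (1 - w / 2 * ∫ s in t..u, Real.exp (-κ * (u - s)) * σ s ^ 2) ≠ 0) :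
    phi σ κ w u u = w ∧
      ∀ t ∈ I, HasDerivAt (phi σ κ w u)
        (κ * phi σ κ w u t - σ t ^ 2 / 2 * phi σ κ w u t ^ 2) t :=
  stmt_19_general σ hσ κ w u I hD
end
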